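/- Let u₀ ∈ H^{3,3}(ℝ). Then the Jost solutions satisfy, for all x ∈ ℝ and all k in the relevant domain (Im(k²) ≤ 0 for ω⁺, Im(k²) ≥ 0 for ω⁻; note −k lies in the same domain as k): ω₁₁^±(x, −k) = ω₁₁^±(x, k) and ω₂₁^±(x, −k) = −ω₂₁^±(x, k). Consequently, the scattering coefficients satisfy a(−k) = a(k) and b(−k) = −b(k) for every k ∈ Σ. -/

import Mathlib

open MeasureTheory Complex Set

noncomputable section

def MemHms (m s : ℕ) (u : ℝ → ℂ) : Prop :=
  ∀ j ≤ m, MemLp (fun x : ℝ => ((1 + x ^ 2) ^ ((s : ℝ) / 2) : ℝ) • iteratedDeriv j u x) 2 volume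

def phi (u₀ : ℝ → ℂ) (x : ℝ) : ℝ := ∫ s in Iio x, ‖deriv u₀ s‖ ^ 2

def qf (u₀ : ℝ → ℂ) (x : ℝ) : ℂ :=
  (starRingEnd ℂ) (deriv u₀ x) * Complex.exp (Complex.I * (phi u₀ x : ℝ))

def SigmaSet : Set ℂ := {k : ℂ | (k ^ 2).im = 0}

def SolPlus (u₀ : ℝ → ℂ) (k : ℂ) (f g : ℝ → ℂ) : Prop :=
  Continuous f ∧ Continuous g ∧
  (∃ C : ℝ, ∀ x : ℝ, ‖f x‖ ≤ C ∧ ‖g x‖ ≤ C) ∧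
  ∀ x : ℝ,
    f x = 1 - k * (∫ y in Ioi x, (starRingEnd ℂ) (qf u₀ y) * g y)
            - (Complex.I / 2) * (∫ y in Ioi x, (‖qf u₀ y‖ : ℂ) ^ 2 * f y) ∧
    g x = k * (∫ y in Ioi x,
              Complex.exp (2 * Complex.I * k ^ 2 * ((x - y : ℝ) : ℂ)) * qf u₀ y * f y)
            + (Complex.I / 2) * (∫ y in Ioi x,
              Complex.exp (2 * Complex.I * k ^ 2 * ((x - y : ℝ) : ℂ))
                * (‖qf u₀ y‖ : ℂ) ^ 2 * g y)

def SolMinus (u₀ : ℝ → ℂ) (k : ℂ) (f g : ℝ → ℂ) : Prop :=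
  Continuous f ∧ Continuous g ∧
  (∃ C : ℝ, ∀ x : ℝ, ‖f x‖ ≤ C ∧ ‖g x‖ ≤ C) ∧
  ∀ x : ℝ,
    f x = 1 - k * (-∫ y in Iio x, (starRingEnd ℂ) (qf u₀ y) * g y)
            - (Complex.I / 2) * (-∫ y in Iio x, (‖qf u₀ y‖ : ℂ) ^ 2 * f y) ∧
    g x = k * (-∫ y in Iio x,
              Complex.exp (2 * Complex.I * k ^ 2 * ((x - y : ℝ) : ℂ)) * qf u₀ y * f y)
            + (Complex.I / 2) * (-∫ y in Iio x,
              Complex.exp (2 * Complex.I * k ^ 2 * ((x - y : ℝ) : ℂ))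
                * (‖qf u₀ y‖ : ℂ) ^ 2 * g y)

/-- `a(k)` built from the Jost solutions. -/
def acoef (ω11p ω21p ω11m ω21m : ℝ → ℂ → ℂ) (k : ℂ) : ℂ :=
  ω11m 0 k * (starRingEnd ℂ) (ω11p 0 ((starRingEnd ℂ) k))
    + ω21m 0 k * (starRingEnd ℂ) (ω21p 0 ((starRingEnd ℂ) k))

/-- `b(k)` built from the Jost solutions. -/
def bcoef (ω11p ω21p ω11m ω21m : ℝ → ℂ → ℂ) (k : ℂ) : ℂ :=
  (starRingEnd ℂ) (ω21p 0 ((starRingEnd ℂ) k)) * (starRingEnd ℂ) (ω11m 0 ((starRingEnd ℂ) k))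
    - (starRingEnd ℂ) (ω11p 0 ((starRingEnd ℂ) k))
        * (starRingEnd ℂ) (ω21m 0 ((starRingEnd ℂ) k))

/-! The substitution `k ↦ -k` leaves `k²` unchanged and flips the sign of every term in which
`k` appears linearly, so `(ω₁₁(·, k), -ω₂₁(·, k))` solves the Volterra system at `-k`. That
system has at most one bounded continuous solution: on the domain of integration the phase
`e^{2ik²(x-y)}` has modulus at most one, so the difference `M` of two solutions satisfies
`M(x) ≤ ∫ m M` over the half-line beyond `x`, with `m` built from `|q|` and `|q|²`, both
integrable because `u₀ ∈ H^{1,1}`; a Gronwall argument then gives `M = 0`. The identities for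
`a` and `b` follow by substituting the symmetries into their defining formulas. -/

open Filter Topology

theorem MemHms.memLp_deriv {m s : ℕ} {u : ℝ → ℂ} (hu : MemHms m s u) (hm : 1 ≤ m) :
    MemLp (deriv u) 2 := by
  have h := hu 1 hm
  simp only [iteratedDeriv_one] at h
  refine h.of_le (measurable_deriv u).aestronglyMeasurable (ae_of_all _ fun x => ?_)
  rw [norm_smul, Real.norm_of_nonneg (by positivity)]
  exact le_mul_of_one_le_left (norm_nonneg _)
    (Real.one_le_rpow (le_add_of_nonneg_right (sq_nonneg x)) (by positivity))

theorem MemHms.integrable_deriv {m s : ℕ} {u : ℝ → ℂ} (hu : MemHms m s u) (hm : 1 ≤ m)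
    (hs : 1 ≤ s) : Integrable (deriv u) := by
  set w : ℝ → ℝ := fun x => (1 + x ^ 2) ^ ((s : ℝ) / 2)
  have hw0 : ∀ x, 0 < w x := fun x => by positivity
  have hw : MemLp (fun x => (w x)⁻¹) 2 := by
    rw [memLp_two_iff_integrable_sq (by fun_prop)]
    have hr : (Module.finrank ℝ ℝ : ℝ) < 2 * s := by
      rw [Module.finrank_self, Nat.cast_one]
      exact_mod_cast (by omega : 1 < 2 * s)
    refine (integrable_rpow_neg_one_add_norm_sq (μ := volume) hr).congr (ae_of_all _ fun x => ?_)
    simp only [w, Real.norm_eq_abs, sq_abs, inv_pow]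
    rw [← Real.rpow_mul_natCast (by positivity), ← Real.rpow_neg (by positivity)]
    congr 1
    ring
  have h : MemLp (fun x => (w x)⁻¹ • (w x • iteratedDeriv 1 u x)) 1 := (hu 1 hm).smul hw
  simp only [iteratedDeriv_one, smul_smul] at h
  rw [← memLp_one_iff_integrable]
  convert h using 2 with x
  rw [inv_mul_cancel₀ (hw0 x).ne', one_smul]

theorem norm_qf (u₀ : ℝ → ℂ) (x : ℝ) : ‖qf u₀ x‖ = ‖deriv u₀ x‖ := by
  rw [qf, norm_mul, Complex.norm_conj, Complex.norm_exp_I_mul_ofReal, mul_one]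

theorem monotone_phi {u₀ : ℝ → ℂ} (h : Integrable fun x => ‖deriv u₀ x‖ ^ 2) :
    Monotone (phi u₀) := fun _ _ hxy =>
  setIntegral_mono_set h.integrableOn (ae_of_all _ fun _ => by positivity)
    (Iio_subset_Iio hxy).eventuallyLE

theorem MemHms.integrable_norm_qf_sq {m s : ℕ} {u₀ : ℝ → ℂ} (hu : MemHms m s u₀) (hm : 1 ≤ m) :
    Integrable fun x => ‖qf u₀ x‖ ^ 2 := by
  simpa only [norm_qf] using (memLp_two_iff_integrable_sq_norm
    (measurable_deriv u₀).aestronglyMeasurable).1 (hu.memLp_deriv hm)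

theorem MemHms.integrable_qf {m s : ℕ} {u₀ : ℝ → ℂ} (hu : MemHms m s u₀) (hm : 1 ≤ m)
    (hs : 1 ≤ s) : Integrable (qf u₀) := by
  have hphi : Measurable (phi u₀) := (monotone_phi (by
    simpa only [norm_qf] using hu.integrable_norm_qf_sq hm)).measurable
  have hq : Measurable (qf u₀) := by
    unfold qf
    fun_prop
  rw [← memLp_one_iff_integrable]
  exact (memLp_one_iff_integrable.2 (hu.integrable_deriv hm hs)).congr_norm
    hq.aestronglyMeasurable (ae_of_all _ fun x => (norm_qf u₀ x).symm)

section Gronwall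

variable {m M : ℝ → ℝ}

theorem le_zero_of_forall_le_setIntegral_mul {s : Set ℝ} (hs : MeasurableSet s)
    (hm : IntegrableOn m s) (hmM : IntegrableOn (fun y => m y * M y) s)
    (hm0 : ∀ y ∈ s, 0 ≤ m y) (hmass : ∫ y in s, m y < 1)
    (hle : ∀ x ∈ s, M x ≤ ∫ y in s, m y * M y) {x : ℝ} (hx : x ∈ s) : M x ≤ 0 := by
  set I := ∫ y in s, m y * M y
  have hI : I ≤ (∫ y in s, m y) * I := calc
    I ≤ ∫ y in s, m y * I :=
      setIntegral_mono_on hmM (hm.mul_const I) hs fun y hy =>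
        mul_le_mul_of_nonneg_left (hle y hy) (hm0 y hy)
    _ = (∫ y in s, m y) * I := integral_mul_const I _
  have hI0 : I ≤ 0 := by nlinarith
  exact (hle x hx).trans hI0

theorem eq_zero_of_le_integral_Ioi_of_setIntegral_lt_one {a : ℝ} {s : Set ℝ}
    (hs : MeasurableSet s) (hsa : s ⊆ Ioi a) (hm : Integrable m)
    (hmM : Integrable fun y => m y * M y) (hm0 : ∀ y, 0 ≤ m y) (hM0 : ∀ x, 0 ≤ M x)
    (hle : ∀ x, M x ≤ ∫ y in Ioi x, m y * M y) (hout : ∀ y ∈ Ioi a \ s, M y = 0)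
    (hmass : ∫ y in s, m y < 1) {x : ℝ} (hx : a < x) : M x = 0 := by
  by_cases hxs : x ∈ s
  · have hIoi : ∫ y in Ioi a, m y * M y = ∫ y in s, m y * M y :=
      setIntegral_eq_of_subset_of_forall_sdiff_eq_zero measurableSet_Ioi hsa
        fun y hy => by rw [hout y hy, mul_zero]
    refine le_antisymm (le_zero_of_forall_le_setIntegral_mul hs hm.integrableOn
      hmM.integrableOn (fun y _ => hm0 y) hmass (fun z hz => ?_) hxs) (hM0 x)
    rw [← hIoi]
    exact (hle z).trans (setIntegral_mono_set hmM.integrableOn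
      (ae_of_all _ fun y => mul_nonneg (hm0 y) (hM0 y)) (Ioi_subset_Ioi (hsa hz).le).eventuallyLE)
  · exact hout x ⟨hx, hxs⟩

theorem exists_lt_setIntegral_Ioc_lt (hm : Integrable m) (c : ℝ) {ε : ℝ} (hε : 0 < ε) :
    ∃ a < c, ∫ y in Ioc a c, m y < ε := by
  have hvol : Tendsto (fun a => volume (Ioc a c)) (𝓝[<] c) (𝓝 0) := by
    have h := ((ENNReal.continuous_ofReal.comp (continuous_sub_left c)).tendsto c).mono_left
      (nhdsWithin_le_nhds (s := Iio c))
    simpa [Real.volume_Ioc, Function.comp_def] using h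
  obtain ⟨a, hmass, hac⟩ := (((hm.tendsto_setIntegral_nhds_zero hvol).eventually
    (gt_mem_nhds hε)).and self_mem_nhdsWithin).exists
  exact ⟨a, hac, hmass⟩

theorem eq_zero_of_le_integral_Ioi {C : ℝ} (hm : Integrable m) (hm0 : ∀ y, 0 ≤ m y)
    (hM : AEStronglyMeasurable M) (hM0 : ∀ x, 0 ≤ M x) (hMC : ∀ x, M x ≤ C)
    (hle : ∀ x, M x ≤ ∫ y in Ioi x, m y * M y) (x : ℝ) : M x = 0 := by
  have hmM : Integrable fun y => m y * M y :=
    hm.mul_bdd hM (ae_of_all _ fun y => (Real.norm_of_nonneg (hM0 y)).trans_le (hMC y))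
  set Z := {a : ℝ | ∀ x, a < x → M x = 0}
  -- `Z` is nonempty and has no least element, since a window of `m`-mass `< 1` to the left of a
  -- point of `Z` is absorbed; so `Z` is not bounded below.
  have hZ : Z.Nonempty := by
    obtain ⟨b, hb⟩ := ((tendsto_integral_Ioi_zero (f := m) tendsto_id).eventually
      (gt_mem_nhds one_pos)).exists
    exact ⟨b, fun x => eq_zero_of_le_integral_Ioi_of_setIntegral_lt_one measurableSet_Ioi
      subset_rfl hm hmM hm0 hM0 hle (by simp) hb⟩
  have hZ_extend : ∀ c ∈ Z, ∃ a < c, a ∈ Z := fun c hc => by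
    obtain ⟨a, hac, ha⟩ := exists_lt_setIntegral_Ioc_lt hm c one_pos
    exact ⟨a, hac, fun x => eq_zero_of_le_integral_Ioi_of_setIntegral_lt_one measurableSet_Ioc
      Ioc_subset_Ioi_self hm hmM hm0 hM0 hle
      (fun y hy => hc y (not_le.1 fun h => hy.2 ⟨hy.1, h⟩)) ha⟩
  by_contra hx
  have hZ_bdd : x ∈ lowerBounds Z := fun a ha => not_lt.1 fun h => hx (ha x h)
  have hinf : sInf Z ∈ Z := fun y hy => by
    obtain ⟨a, haZ, hay⟩ := exists_lt_of_csInf_lt hZ hy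
    exact haZ y hay
  obtain ⟨a, hac, haZ⟩ := hZ_extend _ hinf
  exact (csInf_le ⟨x, hZ_bdd⟩ haZ).not_gt hac

theorem eq_zero_of_le_integral_Iio {C : ℝ} (hm : Integrable m) (hm0 : ∀ y, 0 ≤ m y)
    (hM : AEStronglyMeasurable M) (hM0 : ∀ x, 0 ≤ M x) (hMC : ∀ x, M x ≤ C)
    (hle : ∀ x, M x ≤ ∫ y in Iio x, m y * M y) (x : ℝ) : M x = 0 := by
  have hle' : ∀ y, M (-y) ≤ ∫ z in Ioi y, m (-z) * M (-z) := fun y => by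
    rw [integral_comp_neg_Ioi y fun z => m z * M z, integral_Iic_eq_integral_Iio]
    exact hle (-y)
  simpa using eq_zero_of_le_integral_Ioi (m := fun y => m (-y)) (M := fun y => M (-y))
    hm.comp_neg (fun y => hm0 _)
    (hM.comp_measurePreserving (Measure.measurePreserving_neg volume)) (fun y => hM0 _)
    (fun y => hMC _) hle' (-x)

end Gronwall

theorem norm_setIntegral_sub_le {α E : Type*} [MeasurableSpace α] {μ : Measure α}
    [NormedAddCommGroup E] [NormedSpace ℝ E] {s : Set α} {F₁ F₂ : α → E} {ρ : α → ℝ}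
    (hs : MeasurableSet s) (h₁ : IntegrableOn F₁ s μ) (h₂ : IntegrableOn F₂ s μ)
    (hρ : IntegrableOn ρ s μ) (h : ∀ y ∈ s, ‖F₁ y - F₂ y‖ ≤ ρ y) :
    ‖(∫ y in s, F₁ y ∂μ) - ∫ y in s, F₂ y ∂μ‖ ≤ ∫ y in s, ρ y ∂μ := by
  rw [← integral_sub h₁ h₂]
  exact norm_integral_le_of_norm_le hρ (ae_restrict_of_forall_mem hs h)

theorem norm_sub_add_norm_sub_le {α E : Type*} [SeminormedAddCommGroup E] {f₁ g₁ f₂ g₂ : α → E}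
    {C₁ C₂ : ℝ} (hC₁ : ∀ y, ‖f₁ y‖ ≤ C₁ ∧ ‖g₁ y‖ ≤ C₁) (hC₂ : ∀ y, ‖f₂ y‖ ≤ C₂ ∧ ‖g₂ y‖ ≤ C₂)
    (y : α) : ‖f₁ y - f₂ y‖ + ‖g₁ y - g₂ y‖ ≤ 2 * (C₁ + C₂) := by
  linarith [norm_sub_le (f₁ y) (f₂ y), norm_sub_le (g₁ y) (g₂ y), hC₁ y, hC₂ y]

def jostPhase (k : ℂ) (x y : ℝ) : ℂ := Complex.exp (2 * Complex.I * k ^ 2 * ((x - y : ℝ) : ℂ))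

/- `jostIntegrand11 q k f g` and `jostIntegrand21 q k f g x` are the integrands of the equations
for `ω₁₁` and `ω₂₁`, coefficients included, with `(f, g)` in place of `(ω₁₁, ω₂₁)`. -/
def jostIntegrand11 (q : ℝ → ℂ) (k : ℂ) (f g : ℝ → ℂ) (y : ℝ) : ℂ :=
  k * ((starRingEnd ℂ) (q y) * g y) + Complex.I / 2 * ((‖q y‖ : ℂ) ^ 2 * f y)

def jostIntegrand21 (q : ℝ → ℂ) (k : ℂ) (f g : ℝ → ℂ) (x y : ℝ) : ℂ :=
  k * (jostPhase k x y * q y * f y) + Complex.I / 2 * (jostPhase k x y * (‖q y‖ : ℂ) ^ 2 * g y)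

def jostWeight (q : ℝ → ℂ) (k : ℂ) (y : ℝ) : ℝ := ‖k‖ * ‖q y‖ + ‖q y‖ ^ 2

section Jost

variable {q : ℝ → ℂ} {k : ℂ} {f g : ℝ → ℂ}

theorem norm_jostPhase_le_one {x y : ℝ} (h : 0 ≤ (k ^ 2).im * (x - y)) :
    ‖jostPhase k x y‖ ≤ 1 := by
  rw [jostPhase, Complex.norm_exp, Real.exp_le_one_iff]
  simp only [mul_re, mul_im, re_ofNat, im_ofNat, I_re, I_im, ofReal_re, ofReal_im]
  nlinarith

theorem norm_jostPhase_le_one_of_lt {x y : ℝ} (hk : (k ^ 2).im ≤ 0) (hxy : x < y) :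
    ‖jostPhase k x y‖ ≤ 1 :=
  norm_jostPhase_le_one (mul_nonneg_of_nonpos_of_nonpos hk (sub_nonpos.2 hxy.le))

theorem norm_jostPhase_le_one_of_gt {x y : ℝ} (hk : 0 ≤ (k ^ 2).im) (hxy : y < x) :
    ‖jostPhase k x y‖ ≤ 1 :=
  norm_jostPhase_le_one (mul_nonneg hk (sub_nonneg.2 hxy.le))

theorem jostIntegrand11_sub (f₁ g₁ f₂ g₂ : ℝ → ℂ) (y : ℝ) :
    jostIntegrand11 q k f₁ g₁ y - jostIntegrand11 q k f₂ g₂ y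
      = jostIntegrand11 q k (f₁ - f₂) (g₁ - g₂) y := by
  simp only [jostIntegrand11, Pi.sub_apply]
  ring

theorem jostIntegrand21_sub (f₁ g₁ f₂ g₂ : ℝ → ℂ) (x y : ℝ) :
    jostIntegrand21 q k f₁ g₁ x y - jostIntegrand21 q k f₂ g₂ x y
      = jostIntegrand21 q k (f₁ - f₂) (g₁ - g₂) x y := by
  simp only [jostIntegrand21, Pi.sub_apply]
  ring

theorem norm_jostIntegrand11_le (y : ℝ) :
    ‖jostIntegrand11 q k f g y‖ ≤ jostWeight q k y * (‖f y‖ + ‖g y‖) := by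
  have hI : ‖Complex.I / 2‖ = 1 / 2 := by simp
  calc ‖jostIntegrand11 q k f g y‖
      ≤ ‖k‖ * (‖q y‖ * ‖g y‖) + 1 / 2 * (‖q y‖ ^ 2 * ‖f y‖) := by
        refine (norm_add_le _ _).trans_eq ?_
        simp only [norm_mul, hI, Complex.norm_conj, norm_pow, Complex.norm_real, norm_norm]
    _ ≤ jostWeight q k y * (‖f y‖ + ‖g y‖) := by
        unfold jostWeight
        nlinarith [mul_nonneg (mul_nonneg (norm_nonneg k) (norm_nonneg (q y))) (norm_nonneg (f y)),
          mul_nonneg (sq_nonneg ‖q y‖) (norm_nonneg (f y)),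
          mul_nonneg (sq_nonneg ‖q y‖) (norm_nonneg (g y))]

theorem norm_jostIntegrand21_le {x y : ℝ} (h : ‖jostPhase k x y‖ ≤ 1) :
    ‖jostIntegrand21 q k f g x y‖ ≤ jostWeight q k y * (‖f y‖ + ‖g y‖) := by
  have hI : ‖Complex.I / 2‖ = 1 / 2 := by simp
  calc ‖jostIntegrand21 q k f g x y‖
      ≤ ‖k‖ * (‖q y‖ * ‖f y‖) + 1 / 2 * (‖q y‖ ^ 2 * ‖g y‖) := by
        refine (norm_add_le _ _).trans ?_
        simp only [norm_mul, hI, norm_pow, Complex.norm_real, norm_norm]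
        gcongr <;> exact mul_le_of_le_one_left (by positivity) h
    _ ≤ jostWeight q k y * (‖f y‖ + ‖g y‖) := by
        unfold jostWeight
        nlinarith [mul_nonneg (mul_nonneg (norm_nonneg k) (norm_nonneg (q y))) (norm_nonneg (g y)),
          mul_nonneg (sq_nonneg ‖q y‖) (norm_nonneg (f y)),
          mul_nonneg (sq_nonneg ‖q y‖) (norm_nonneg (g y))]

theorem integrable_jostWeight (hq : Integrable q) (hq2 : Integrable fun y => ‖q y‖ ^ 2) :
    Integrable (jostWeight q k) :=
  (hq.norm.const_mul ‖k‖).add hq2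

theorem integrable_conj_mul (hq : Integrable q) (hg : AEStronglyMeasurable g) {C : ℝ}
    (hgC : ∀ y, ‖g y‖ ≤ C) : Integrable fun y => (starRingEnd ℂ) (q y) * g y := by
  have hq' : Integrable fun y => (starRingEnd ℂ) (q y) := by
    simpa using Complex.conjCLE.toContinuousLinearMap.integrable_comp hq
  exact hq'.mul_bdd hg (ae_of_all _ hgC)

theorem integrable_ofReal_norm_sq (hq2 : Integrable fun y => ‖q y‖ ^ 2) :
    Integrable fun y => (‖q y‖ : ℂ) ^ 2 := by
  simpa using hq2.ofReal (𝕜 := ℂ)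

theorem integrableOn_jostPhase_mul_mul {p φ : ℝ → ℂ} {s : Set ℝ} {x C : ℝ} (hs : MeasurableSet s)
    (hE : ∀ y ∈ s, ‖jostPhase k x y‖ ≤ 1) (hp : Integrable p) (hφ : AEStronglyMeasurable φ)
    (hφC : ∀ y, ‖φ y‖ ≤ C) : IntegrableOn (fun y => jostPhase k x y * p y * φ y) s :=
  (hp.integrableOn.bdd_mul (by unfold jostPhase; fun_prop)
    (ae_restrict_of_forall_mem hs hE)).mul_bdd hφ.restrict (ae_of_all _ hφC)

theorem integrable_jostIntegrand11 (hq : Integrable q) (hq2 : Integrable fun y => ‖q y‖ ^ 2)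
    (hf : AEStronglyMeasurable f) (hg : AEStronglyMeasurable g) {C : ℝ}
    (hC : ∀ y, ‖f y‖ ≤ C ∧ ‖g y‖ ≤ C) : Integrable (jostIntegrand11 q k f g) :=
  ((integrable_conj_mul hq hg fun y => (hC y).2).const_mul k).add
    (((integrable_ofReal_norm_sq hq2).mul_bdd hf (ae_of_all _ fun y => (hC y).1)).const_mul _)

theorem setIntegral_jostIntegrand11 (s : Set ℝ) (hq : Integrable q)
    (hq2 : Integrable fun y => ‖q y‖ ^ 2) (hf : AEStronglyMeasurable f)
    (hg : AEStronglyMeasurable g) {C : ℝ} (hC : ∀ y, ‖f y‖ ≤ C ∧ ‖g y‖ ≤ C) :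
    ∫ y in s, jostIntegrand11 q k f g y
      = k * (∫ y in s, (starRingEnd ℂ) (q y) * g y)
        + Complex.I / 2 * ∫ y in s, (‖q y‖ : ℂ) ^ 2 * f y := by
  unfold jostIntegrand11
  rw [integral_add ((integrable_conj_mul hq hg fun y => (hC y).2).const_mul k).integrableOn
      (((integrable_ofReal_norm_sq hq2).mul_bdd hf
        (ae_of_all _ fun y => (hC y).1)).const_mul _).integrableOn,
    integral_const_mul, integral_const_mul]

theorem integrableOn_jostIntegrand21 {s : Set ℝ} {x : ℝ} (hs : MeasurableSet s)
    (hE : ∀ y ∈ s, ‖jostPhase k x y‖ ≤ 1) (hq : Integrable q)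
    (hq2 : Integrable fun y => ‖q y‖ ^ 2) (hf : AEStronglyMeasurable f)
    (hg : AEStronglyMeasurable g) {C : ℝ} (hC : ∀ y, ‖f y‖ ≤ C ∧ ‖g y‖ ≤ C) :
    IntegrableOn (jostIntegrand21 q k f g x) s :=
  ((integrableOn_jostPhase_mul_mul hs hE hq hf fun y => (hC y).1).const_mul k).add
    ((integrableOn_jostPhase_mul_mul hs hE (integrable_ofReal_norm_sq hq2) hg
      fun y => (hC y).2).const_mul _)

theorem setIntegral_jostIntegrand21 {s : Set ℝ} {x : ℝ} (hs : MeasurableSet s)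
    (hE : ∀ y ∈ s, ‖jostPhase k x y‖ ≤ 1) (hq : Integrable q)
    (hq2 : Integrable fun y => ‖q y‖ ^ 2) (hf : AEStronglyMeasurable f)
    (hg : AEStronglyMeasurable g) {C : ℝ} (hC : ∀ y, ‖f y‖ ≤ C ∧ ‖g y‖ ≤ C) :
    ∫ y in s, jostIntegrand21 q k f g x y
      = k * (∫ y in s, jostPhase k x y * q y * f y)
        + Complex.I / 2 * ∫ y in s, jostPhase k x y * (‖q y‖ : ℂ) ^ 2 * g y := by
  unfold jostIntegrand21
  rw [integral_add ((integrableOn_jostPhase_mul_mul hs hE hq hf fun y => (hC y).1).const_mul k)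
      ((integrableOn_jostPhase_mul_mul hs hE (integrable_ofReal_norm_sq hq2) hg
        fun y => (hC y).2).const_mul _),
    integral_const_mul, integral_const_mul]

theorem norm_sub_setIntegral_jost_le {s : Set ℝ} {x : ℝ} (hs : MeasurableSet s)
    (hE : ∀ y ∈ s, ‖jostPhase k x y‖ ≤ 1) (hq : Integrable q)
    (hq2 : Integrable fun y => ‖q y‖ ^ 2) {f₁ g₁ f₂ g₂ : ℝ → ℂ}
    (hf₁ : AEStronglyMeasurable f₁) (hg₁ : AEStronglyMeasurable g₁)
    (hf₂ : AEStronglyMeasurable f₂) (hg₂ : AEStronglyMeasurable g₂) {C₁ C₂ : ℝ}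
    (hC₁ : ∀ y, ‖f₁ y‖ ≤ C₁ ∧ ‖g₁ y‖ ≤ C₁) (hC₂ : ∀ y, ‖f₂ y‖ ≤ C₂ ∧ ‖g₂ y‖ ≤ C₂) :
    ‖(∫ y in s, jostIntegrand11 q k f₁ g₁ y) - ∫ y in s, jostIntegrand11 q k f₂ g₂ y‖
      + ‖(∫ y in s, jostIntegrand21 q k f₁ g₁ x y) - ∫ y in s, jostIntegrand21 q k f₂ g₂ x y‖
      ≤ ∫ y in s, 2 * jostWeight q k y * (‖f₁ y - f₂ y‖ + ‖g₁ y - g₂ y‖) := by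
  have hwM : IntegrableOn
      (fun y => jostWeight q k y * (‖f₁ y - f₂ y‖ + ‖g₁ y - g₂ y‖)) s := by
    refine ((integrable_jostWeight hq hq2).mul_bdd (c := 2 * (C₁ + C₂)) (by fun_prop)
      (ae_of_all _ fun y => ?_)).integrableOn
    rw [Real.norm_of_nonneg (by positivity)]
    exact norm_sub_add_norm_sub_le hC₁ hC₂ y
  simp_rw [mul_assoc, integral_const_mul, two_mul]
  exact add_le_add
    (norm_setIntegral_sub_le hs (integrable_jostIntegrand11 hq hq2 hf₁ hg₁ hC₁).integrableOn
      (integrable_jostIntegrand11 hq hq2 hf₂ hg₂ hC₂).integrableOn hwM fun y _ => by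
        rw [jostIntegrand11_sub]
        exact norm_jostIntegrand11_le y)
    (norm_setIntegral_sub_le hs (integrableOn_jostIntegrand21 hs hE hq hq2 hf₁ hg₁ hC₁)
      (integrableOn_jostIntegrand21 hs hE hq hq2 hf₂ hg₂ hC₂) hwM fun y hy => by
        rw [jostIntegrand21_sub]
        exact norm_jostIntegrand21_le (hE y hy))

end Jost

section Solutions

variable {u₀ : ℝ → ℂ} {k : ℂ} {f g f₁ g₁ f₂ g₂ : ℝ → ℂ}

theorem SolPlus.eq_setIntegral (hq : Integrable (qf u₀))
    (hq2 : Integrable fun y => ‖qf u₀ y‖ ^ 2) (hk : (k ^ 2).im ≤ 0) (h : SolPlus u₀ k f g)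
    (x : ℝ) :
    f x = 1 - (∫ y in Ioi x, jostIntegrand11 (qf u₀) k f g y) ∧
      g x = ∫ y in Ioi x, jostIntegrand21 (qf u₀) k f g x y := by
  obtain ⟨hf, hg, ⟨C, hC⟩, heq⟩ := h
  have hE : ∀ y ∈ Ioi x, ‖jostPhase k x y‖ ≤ 1 := fun _ hy => norm_jostPhase_le_one_of_lt hk hy
  rw [setIntegral_jostIntegrand11 _ hq hq2 hf.aestronglyMeasurable hg.aestronglyMeasurable hC,
    setIntegral_jostIntegrand21 measurableSet_Ioi hE hq hq2 hf.aestronglyMeasurable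
      hg.aestronglyMeasurable hC, ← sub_sub]
  exact heq x

theorem SolMinus.eq_setIntegral (hq : Integrable (qf u₀))
    (hq2 : Integrable fun y => ‖qf u₀ y‖ ^ 2) (hk : 0 ≤ (k ^ 2).im) (h : SolMinus u₀ k f g)
    (x : ℝ) :
    f x = 1 + (∫ y in Iio x, jostIntegrand11 (qf u₀) k f g y) ∧
      g x = -∫ y in Iio x, jostIntegrand21 (qf u₀) k f g x y := by
  obtain ⟨hf, hg, ⟨C, hC⟩, heq⟩ := h
  have hE : ∀ y ∈ Iio x, ‖jostPhase k x y‖ ≤ 1 := fun _ hy => norm_jostPhase_le_one_of_gt hk hy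
  rw [setIntegral_jostIntegrand11 _ hq hq2 hf.aestronglyMeasurable hg.aestronglyMeasurable hC,
    setIntegral_jostIntegrand21 measurableSet_Iio hE hq hq2 hf.aestronglyMeasurable
      hg.aestronglyMeasurable hC]
  unfold jostPhase
  constructor
  · linear_combination (heq x).1
  · linear_combination (heq x).2

theorem SolPlus.unique (hq : Integrable (qf u₀)) (hq2 : Integrable fun y => ‖qf u₀ y‖ ^ 2)
    (hk : (k ^ 2).im ≤ 0) (h₁ : SolPlus u₀ k f₁ g₁) (h₂ : SolPlus u₀ k f₂ g₂) :
    f₁ = f₂ ∧ g₁ = g₂ := by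
  have ⟨hf₁, hg₁, ⟨C₁, hC₁⟩, _⟩ := h₁
  have ⟨hf₂, hg₂, ⟨C₂, hC₂⟩, _⟩ := h₂
  have key : ∀ x, ‖f₁ x - f₂ x‖ + ‖g₁ x - g₂ x‖
      ≤ ∫ y in Ioi x, 2 * jostWeight (qf u₀) k y * (‖f₁ y - f₂ y‖ + ‖g₁ y - g₂ y‖) := by
    intro x
    obtain ⟨e₁, e₁'⟩ := h₁.eq_setIntegral hq hq2 hk x
    obtain ⟨e₂, e₂'⟩ := h₂.eq_setIntegral hq hq2 hk x
    rw [e₁, e₂, e₁', e₂', sub_sub_sub_cancel_left, norm_sub_rev]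
    exact norm_sub_setIntegral_jost_le measurableSet_Ioi
      (fun _ hy => norm_jostPhase_le_one_of_lt hk hy) hq hq2
      hf₁.aestronglyMeasurable hg₁.aestronglyMeasurable hf₂.aestronglyMeasurable
      hg₂.aestronglyMeasurable hC₁ hC₂
  have h0 := eq_zero_of_le_integral_Ioi ((integrable_jostWeight hq hq2).const_mul 2)
    (fun y => by unfold jostWeight; positivity) (by fun_prop) (fun x => by positivity)
    (norm_sub_add_norm_sub_le hC₁ hC₂) key
  simpa [add_eq_zero_iff_of_nonneg, sub_eq_zero, funext_iff, forall_and] using h0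

theorem SolMinus.unique (hq : Integrable (qf u₀)) (hq2 : Integrable fun y => ‖qf u₀ y‖ ^ 2)
    (hk : 0 ≤ (k ^ 2).im) (h₁ : SolMinus u₀ k f₁ g₁) (h₂ : SolMinus u₀ k f₂ g₂) :
    f₁ = f₂ ∧ g₁ = g₂ := by
  have ⟨hf₁, hg₁, ⟨C₁, hC₁⟩, _⟩ := h₁
  have ⟨hf₂, hg₂, ⟨C₂, hC₂⟩, _⟩ := h₂
  have key : ∀ x, ‖f₁ x - f₂ x‖ + ‖g₁ x - g₂ x‖
      ≤ ∫ y in Iio x, 2 * jostWeight (qf u₀) k y * (‖f₁ y - f₂ y‖ + ‖g₁ y - g₂ y‖) := by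
    intro x
    obtain ⟨e₁, e₁'⟩ := h₁.eq_setIntegral hq hq2 hk x
    obtain ⟨e₂, e₂'⟩ := h₂.eq_setIntegral hq hq2 hk x
    rw [e₁, e₂, e₁', e₂', add_sub_add_left_eq_sub, ← neg_sub', norm_neg]
    exact norm_sub_setIntegral_jost_le measurableSet_Iio
      (fun _ hy => norm_jostPhase_le_one_of_gt hk hy) hq hq2
      hf₁.aestronglyMeasurable hg₁.aestronglyMeasurable hf₂.aestronglyMeasurable
      hg₂.aestronglyMeasurable hC₁ hC₂
  have h0 := eq_zero_of_le_integral_Iio ((integrable_jostWeight hq hq2).const_mul 2)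
    (fun y => by unfold jostWeight; positivity) (by fun_prop) (fun x => by positivity)
    (norm_sub_add_norm_sub_le hC₁ hC₂) key
  simpa [add_eq_zero_iff_of_nonneg, sub_eq_zero, funext_iff, forall_and] using h0

theorem SolPlus.neg (h : SolPlus u₀ k f g) : SolPlus u₀ (-k) f (-g) := by
  obtain ⟨hf, hg, ⟨C, hC⟩, heq⟩ := h
  refine ⟨hf, hg.neg, ⟨C, fun x => by simpa using hC x⟩, fun x => ?_⟩
  simp only [Pi.neg_apply, neg_sq, mul_neg, integral_neg]
  constructor
  · linear_combination (heq x).1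
  · linear_combination -(heq x).2

theorem SolMinus.neg (h : SolMinus u₀ k f g) : SolMinus u₀ (-k) f (-g) := by
  obtain ⟨hf, hg, ⟨C, hC⟩, heq⟩ := h
  refine ⟨hf, hg.neg, ⟨C, fun x => by simpa using hC x⟩, fun x => ?_⟩
  simp only [Pi.neg_apply, neg_sq, mul_neg, integral_neg]
  constructor
  · linear_combination (heq x).1
  · linear_combination -(heq x).2

end Solutions

theorem stmt_11 (u₀ : ℝ → ℂ) (hu : MemHms 3 3 u₀)
    (ω11p ω21p ω11m ω21m : ℝ → ℂ → ℂ)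
    (hp : ∀ k : ℂ, (k ^ 2).im ≤ 0 →
      SolPlus u₀ k (fun x => ω11p x k) (fun x => ω21p x k))
    (hm : ∀ k : ℂ, 0 ≤ (k ^ 2).im →
      SolMinus u₀ k (fun x => ω11m x k) (fun x => ω21m x k)) :
    (∀ (x : ℝ) (k : ℂ), (k ^ 2).im ≤ 0 →
      ω11p x (-k) = ω11p x k ∧ ω21p x (-k) = -ω21p x k) ∧
    (∀ (x : ℝ) (k : ℂ), 0 ≤ (k ^ 2).im →
      ω11m x (-k) = ω11m x k ∧ ω21m x (-k) = -ω21m x k) ∧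
    (∀ k ∈ SigmaSet,
      acoef ω11p ω21p ω11m ω21m (-k) = acoef ω11p ω21p ω11m ω21m k ∧
      bcoef ω11p ω21p ω11m ω21m (-k) = -bcoef ω11p ω21p ω11m ω21m k) := by
  have hq := hu.integrable_qf (by norm_num) (by norm_num)
  have hq2 := hu.integrable_norm_qf_sq (by norm_num)
  have plus (x : ℝ) (k : ℂ) (hk : (k ^ 2).im ≤ 0) :
      ω11p x (-k) = ω11p x k ∧ ω21p x (-k) = -ω21p x k := by
    have hk' : ((-k) ^ 2).im ≤ 0 := by rwa [neg_sq]
    obtain ⟨h11, h21⟩ := SolPlus.unique hq hq2 hk' (hp (-k) hk') (hp k hk).neg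
    exact ⟨congrFun h11 x, congrFun h21 x⟩
  have minus (x : ℝ) (k : ℂ) (hk : 0 ≤ (k ^ 2).im) :
      ω11m x (-k) = ω11m x k ∧ ω21m x (-k) = -ω21m x k := by
    have hk' : 0 ≤ ((-k) ^ 2).im := by rwa [neg_sq]
    obtain ⟨h11, h21⟩ := SolMinus.unique hq hq2 hk' (hm (-k) hk') (hm k hk).neg
    exact ⟨congrFun h11 x, congrFun h21 x⟩
  refine ⟨plus, minus, fun k (hk : (k ^ 2).im = 0) => ?_⟩
  have hk' : ((starRingEnd ℂ) k ^ 2).im = 0 := by rw [← map_pow, conj_im, hk, neg_zero]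
  simp only [acoef, bcoef, map_neg, (plus 0 _ hk'.le).1, (plus 0 _ hk'.le).2, (minus 0 _ hk.ge).1,
    (minus 0 _ hk.ge).2, (minus 0 _ hk'.ge).1, (minus 0 _ hk'.ge).2]
  constructor <;> ring
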